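/- Fix β ∈ (0,1). For every α ∈ (0,1], every compact set K ⊆ ℝ and every ε > 0, there exist L ∈ ℕ and affine maps t₀, t₁, …, t_L : ℝ → ℝ such that the width-1 network Φ = t_L ∘ LeakyReLU_β ∘ t_{L−1} ∘ ⋯ ∘ LeakyReLU_β ∘ t₀, in which every activation is the fixed LeakyReLU_β, satisfies sup_{x ∈ K} |Φ(x) − LeakyReLU_α(x)| < ε. -/

import Mathlib

noncomputable def leakyReLU (β : ℝ) (x : ℝ) : ℝ := if 0 ≤ x then x else β * x

/-- The width-1 scalar network `t_L ∘ σ ∘ t_{L-1} ∘ ⋯ ∘ σ ∘ t_0`, with the fixed activation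
`σ` and affine maps `t_i(x) = w i * x + b i`. -/
noncomputable def scalarNet (σ : ℝ → ℝ) (w b : ℕ → ℝ) : ℕ → ℝ → ℝ
  | 0 => fun x => w 0 * x + b 0
  | (L + 1) => fun x => w (L + 1) * σ (scalarNet σ w b L x) + b (L + 1)

namespace LeakyAux

lemma leaky_of_nonneg {β x : ℝ} (h : 0 ≤ x) : leakyReLU β x = x := if_pos h

lemma leaky_of_nonpos {β x : ℝ} (h : x ≤ 0) : leakyReLU β x = β * x := by
  unfold leakyReLU
  split_ifs with h1
  · have : x = 0 := le_antisymm h h1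
    simp [this]
  · rfl

lemma leaky_mono {β : ℝ} (hβ : 0 < β) : Monotone (leakyReLU β) := by
  intro x y hxy
  unfold leakyReLU
  split_ifs with h1 h2 h2 <;> nlinarith

def Realizable (β : ℝ) (f : ℝ → ℝ) : Prop :=
  ∃ L w b, ∀ x, scalarNet (leakyReLU β) w b L x = f x

lemma scalarNet_congr (σ : ℝ → ℝ) (w b w' b' : ℕ → ℝ) :
    ∀ L : ℕ, (∀ i ≤ L, w i = w' i ∧ b i = b' i) →
      ∀ x, scalarNet σ w b L x = scalarNet σ w' b' L x := by
  intro L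
  induction L with
  | zero => intro h x; simp [scalarNet, (h 0 le_rfl).1, (h 0 le_rfl).2]
  | succ n ih =>
      intro h x
      simp only [scalarNet]
      rw [ih (fun i hi => h i (hi.trans (Nat.le_succ n))) x,
        (h (n+1) le_rfl).1, (h (n+1) le_rfl).2]

lemma Realizable.congr {β : ℝ} {f g : ℝ → ℝ} (h : Realizable β f) (hfg : ∀ x, f x = g x) :
    Realizable β g := by
  obtain ⟨L, w, b, hw⟩ := h
  exact ⟨L, w, b, fun x => (hw x).trans (hfg x)⟩

lemma realizable_affine (β c d : ℝ) : Realizable β (fun x => c * x + d) :=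
  ⟨0, fun _ => c, fun _ => d, fun _ => rfl⟩

lemma Realizable.post {β : ℝ} {f : ℝ → ℝ} (h : Realizable β f) (c d : ℝ) :
    Realizable β (fun x => c * f x + d) := by
  obtain ⟨L, w, b, hw⟩ := h
  refine ⟨L, fun i => if i = L then c * w i else w i,
    fun i => if i = L then c * b i + d else b i, fun x => ?_⟩
  cases L with
  | zero =>
      show (if (0:ℕ) = 0 then c * w 0 else w 0) * x + (if (0:ℕ) = 0 then c * b 0 + d else b 0)
        = c * f x + d
      rw [← hw x]
      show c * w 0 * x + (c * b 0 + d) = c * (w 0 * x + b 0) + d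
      ring
  | succ n =>
      show (if n+1 = n+1 then c * w (n+1) else w (n+1)) *
          (leakyReLU β) (scalarNet (leakyReLU β) _ _ n x)
          + (if n+1 = n+1 then c * b (n+1) + d else b (n+1)) = c * f x + d
      rw [if_pos rfl, if_pos rfl,
        scalarNet_congr (leakyReLU β) _ _ w b n
          (fun i hi => ⟨if_neg (by omega), if_neg (by omega)⟩) x]
      rw [← hw x]
      show c * w (n+1) * leakyReLU β (scalarNet (leakyReLU β) w b n x) + (c * b (n+1) + d)
        = c * (w (n+1) * leakyReLU β (scalarNet (leakyReLU β) w b n x) + b (n+1)) + d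
      ring

lemma Realizable.act {β : ℝ} {f : ℝ → ℝ} (h : Realizable β f) (a e : ℝ) :
    Realizable β (fun x => a * leakyReLU β (f x) + e) := by
  obtain ⟨L, w, b, hw⟩ := h
  refine ⟨L + 1, fun i => if i = L + 1 then a else w i,
    fun i => if i = L + 1 then e else b i, fun x => ?_⟩
  show (if L+1 = L+1 then a else w (L+1)) *
      (leakyReLU β) (scalarNet (leakyReLU β) _ _ L x)
      + (if L+1 = L+1 then e else b (L+1)) = a * leakyReLU β (f x) + e
  rw [if_pos rfl, if_pos rfl,
    scalarNet_congr (leakyReLU β) _ _ w b L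
      (fun i hi => ⟨if_neg (by omega), if_neg (by omega)⟩) x, hw x]

lemma Realizable.elbowL {β : ℝ} {f : ℝ → ℝ} (h : Realizable β f) (c : ℝ) :
    Realizable β (fun x => leakyReLU β (f x - c) + c) := by
  have := ((h.post 1 (-c)).act 1 c)
  exact this.congr (fun x => by simp [sub_eq_add_neg])

lemma Realizable.elbowR {β : ℝ} {f : ℝ → ℝ} (h : Realizable β f) (c : ℝ) :
    Realizable β (fun x => -(leakyReLU β (-(f x - c))) + c) := by
  have := ((h.post (-1) c).act (-1) c)
  exact this.congr (fun x => by rw [show (-1:ℝ) * f x + c = -(f x - c) by ring]; ring)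

lemma realizable_leaky_pow (β : ℝ) (hβ : 0 < β) :
    ∀ m : ℕ, Realizable β (leakyReLU (β ^ m)) := by
  intro m
  induction m with
  | zero =>
      refine (realizable_affine β 1 0).congr (fun x => ?_)
      unfold leakyReLU
      split_ifs <;> ring
  | succ n ih =>
      refine (ih.act 1 0).congr (fun x => ?_)
      rcases le_or_gt 0 x with hx | hx
      · rw [leaky_of_nonneg (β := β ^ n) hx, leaky_of_nonneg hx,
          leaky_of_nonneg (β := β ^ (n+1)) hx]
        ring
      · rw [leaky_of_nonpos (β := β ^ n) hx.le,
          leaky_of_nonpos (mul_nonpos_of_nonneg_of_nonpos (pow_pos hβ n).le hx.le),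
          leaky_of_nonpos (β := β ^ (n+1)) hx.le]
        ring

end LeakyAux

namespace LeakyAux

set_option maxHeartbeats 2000000 in
lemma key (β α p δ a bb : ℝ) (hβ0 : 0 < β) (hβ1 : β < 1)
    (hqα : β * p < α) (hαp : α ≤ p) (hp1 : p ≤ 1) (hα0 : 0 < α) (hα1 : α ≤ 1)
    (hδ : 0 < δ) (ha : 0 ≤ a) (hb : 0 ≤ bb) (hab : a + bb = δ)
    (habα : p * a + (β * p) * bb = α * δ)
    (hre : Realizable β (leakyReLU p)) :
    ∀ k : ℕ, ∃ f o, Realizable β f ∧ Monotone f ∧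
      (∀ x, 0 ≤ x → f x = β ^ k * x + o) ∧
      (∀ x, -((k : ℝ) * δ) ≤ x → x ≤ 0 → |f x - (β ^ k * (α * x) + o)| ≤ β ^ k * (2 * δ)) ∧
      (f (-((k : ℝ) * δ)) = β ^ k * (-(α * ((k : ℝ) * δ))) + o) ∧
      (∀ x, x ≤ -((k : ℝ) * δ) → f x = f (-((k : ℝ) * δ)) + β ^ k * (p * (x + (k : ℝ) * δ))) := by
  have hp0 : 0 < p := lt_of_lt_of_le hα0 hαp
  intro k
  induction k with
  | zero =>
      refine ⟨leakyReLU p, 0, hre, leaky_mono hp0, ?_, ?_, ?_, ?_⟩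
      · intro x hx; rw [leaky_of_nonneg hx]; ring
      · intro x hx1 hx2
        have hx : x = 0 := le_antisymm hx2 (by simpa using hx1)
        subst hx
        rw [leaky_of_nonneg le_rfl]
        simp
        positivity
      · norm_num [leaky_of_nonneg (le_refl (0:ℝ))]
      · intro x hx
        simp only [Nat.cast_zero, zero_mul, neg_zero] at hx ⊢
        rw [leaky_of_nonpos hx, leaky_of_nonneg le_rfl]
        ring
  | succ k ih =>
      obtain ⟨f, o, href, hmono, hpos, hmid, hanc, hray⟩ := ih
      have hβk : (0:ℝ) < β ^ k := pow_pos hβ0 k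
      have hβk1 : (0:ℝ) < β ^ (k+1) := pow_pos hβ0 (k+1)
      obtain ⟨t1, ht1⟩ : ∃ y : ℝ, y = -((k : ℝ) * δ) - a := ⟨_, rfl⟩
      obtain ⟨b1, hb1⟩ : ∃ y : ℝ, y = f t1 := ⟨_, rfl⟩
      obtain ⟨t2, ht2⟩ : ∃ y : ℝ, y = -(((k : ℝ) + 1) * δ) := ⟨_, rfl⟩
      have ht2t1 : t2 = t1 - bb := by rw [ht2, ht1]; linarith
      have ht1le : t1 ≤ -((k : ℝ) * δ) := by rw [ht1]; linarith
      have hkδ : (0:ℝ) ≤ (k : ℝ) * δ := by positivity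
      obtain ⟨F, hF⟩ : ∃ F : ℝ → ℝ, F = fun x => leakyReLU β (f x - b1) + b1 := ⟨_, rfl⟩
      have hFmono : Monotone F := by
        intro x y hxy
        have h1 := (leaky_mono hβ0) (sub_le_sub_right (hmono hxy) b1)
        simpa [hF] using add_le_add_right h1 b1
      have hFge : ∀ x, t1 ≤ x → F x = f x := by
        intro x hx
        have h1 : b1 ≤ f x := hb1 ▸ hmono hx
        simp only [hF]
        rw [leaky_of_nonneg (by linarith : (0:ℝ) ≤ f x - b1)]
        ring
      have hb1val : b1 = β ^ k * (-(α * ((k : ℝ) * δ))) + o + β ^ k * (p * (-a)) := by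
        rw [hb1, hray t1 ht1le, hanc, ht1]
        ring_nf
      have hfray' : ∀ x, x ≤ t1 → f x = b1 + β ^ k * (p * (x - t1)) := by
        intro x hx
        rw [hb1, hray x (le_trans hx ht1le), hray t1 ht1le, ht1]
        ring
      have hFle : ∀ x, x ≤ t1 → F x = b1 + β ^ (k+1) * (p * (x - t1)) := by
        intro x hx
        have hfx := hfray' x hx
        have hneg : f x - b1 ≤ 0 := by
          rw [hfx]
          have h1 : x - t1 ≤ 0 := by linarith
          have h2 : (β ^ k * p) * (x - t1) ≤ 0 :=
            mul_nonpos_of_nonneg_of_nonpos (mul_nonneg hβk.le hp0.le) h1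
          nlinarith [h2]
        simp only [hF]
        rw [leaky_of_nonpos hneg, hfx, pow_succ]
        ring
      obtain ⟨b2, hb2⟩ : ∃ y : ℝ, y = F t2 := ⟨_, rfl⟩
      have hb2val : b2 = b1 + β ^ (k+1) * (p * (-bb)) := by
        rw [hb2, hFle t2 (by rw [ht2t1]; linarith), ht2t1]
        ring
      obtain ⟨g, hg⟩ : ∃ g : ℝ → ℝ, g = fun x => -(leakyReLU β (-(F x - b2))) + b2 := ⟨_, rfl⟩
      have hgmono : Monotone g := by
        intro x y hxy
        have h1 := (leaky_mono hβ0) (neg_le_neg (sub_le_sub_right (hFmono hxy) b2))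
        simp only [hg]
        linarith
      have hgle : ∀ x, x ≤ t2 → g x = F x := by
        intro x hx
        have h1 : F x ≤ b2 := hb2 ▸ hFmono hx
        simp only [hg]
        rw [leaky_of_nonneg (by linarith : (0:ℝ) ≤ -(F x - b2))]
        ring
      have hgge : ∀ x, t2 ≤ x → g x = β * F x + (1 - β) * b2 := by
        intro x hx
        have h1 : b2 ≤ F x := hb2 ▸ hFmono hx
        simp only [hg]
        rw [leaky_of_nonpos (by linarith : -(F x - b2) ≤ 0)]
        ring
      obtain ⟨o', ho'⟩ : ∃ y : ℝ, y = β * o + (1 - β) * b2 := ⟨_, rfl⟩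
      have hreg : Realizable β g := by
        have h1 : Realizable β F := (href.elbowL b1).congr (fun x => by rw [hF])
        exact (h1.elbowR b2).congr (fun x => by rw [hg, hF])
      refine ⟨g, o', hreg, hgmono, ?_, ?_, ?_, ?_⟩
      · -- positive side
        intro x hx
        have h1 : t2 ≤ x := le_trans (by rw [ht2t1]; linarith) hx
        rw [hgge x h1, hFge x (by linarith), hpos x hx, ho', pow_succ]
        ring
      · -- middle estimate
        intro x hx1 hx2
        push_cast at hx1
        rcases le_total (-((k : ℝ) * δ)) x with hA | hA
        · -- case A : old middle region
          have h2 : t2 ≤ x := by rw [ht2t1]; linarith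
          have heq : g x - (β ^ (k+1) * (α * x) + o') =
              β * (f x - (β ^ k * (α * x) + o)) := by
            rw [hgge x h2, hFge x (by linarith), ho', pow_succ]
            ring
          rw [heq, abs_mul, abs_of_pos hβ0, pow_succ]
          calc β * |f x - (β ^ k * (α * x) + o)| ≤ β * (β ^ k * (2 * δ)) :=
                mul_le_mul_of_nonneg_left (hmid x hA hx2) hβ0.le
            _ = β ^ k * β * (2 * δ) := by ring
        · rcases le_total t1 x with hB | hB
          · -- case B : new cell, slope-p part
            have h2 : t2 ≤ x := by rw [ht2t1]; linarith
            have heq : g x - (β ^ (k+1) * (α * x) + o') =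
                β ^ (k+1) * ((p - α) * (x + (k : ℝ) * δ)) := by
              rw [hgge x h2, hFge x hB, hray x hA, hanc, ho', pow_succ]
              ring
            have hu1 : -a ≤ x + (k : ℝ) * δ := by rw [ht1] at hB; linarith
            have hu2 : x + (k : ℝ) * δ ≤ 0 := by linarith
            have hpa : 0 ≤ p - α := by linarith
            have hpa1 : p - α ≤ 1 := by linarith
            have hm1 : (0:ℝ) ≤ (1 - (p - α)) * (-(x + (k : ℝ) * δ)) :=
              mul_nonneg (by linarith) (by linarith)
            have hm2 : (p - α) * (x + (k : ℝ) * δ) ≤ 0 :=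
              mul_nonpos_of_nonneg_of_nonpos hpa hu2
            have key1 : -(2 * δ) ≤ (p - α) * (x + (k : ℝ) * δ) := by nlinarith [hm1, hm2]
            have key2 : (p - α) * (x + (k : ℝ) * δ) ≤ 2 * δ := by linarith
            rw [heq, abs_mul, abs_of_pos hβk1]
            exact mul_le_mul_of_nonneg_left (abs_le.2 ⟨key1, key2⟩) hβk1.le
          · -- case C : new cell, slope-q part
            have h2 : t2 ≤ x := by rw [ht2]; exact hx1
            have heq : g x - (β ^ (k+1) * (α * x) + o') =
                β ^ (k+1) * (a * (α - p) + (x - t1) * (β * p - α)) := by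
              rw [hgge x h2, hFle x hB, hb1val, ho', ht1, pow_succ]
              ring
            have hu1 : -bb ≤ x - t1 := by rw [ht2t1] at h2; linarith
            have hu2 : x - t1 ≤ 0 := by linarith
            have hq0 : (0:ℝ) < β * p := mul_pos hβ0 hp0
            have h3 : 0 ≤ α - β * p := by linarith
            have h4 : α - β * p ≤ 1 := by linarith
            have h5 : 0 ≤ p - α := by linarith
            have h6 : p - α ≤ 1 := by linarith
            have hc1 : a * (p - α) ≤ a * 1 := mul_le_mul_of_nonneg_left h6 ha
            have hc2 : (0:ℝ) ≤ (-(x - t1)) * (α - β * p) :=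
              mul_nonneg (by linarith) h3
            have hc3 : (x - t1) * (β * p - α) ≤ (-bb) * (β * p - α) :=
              mul_le_mul_of_nonpos_right hu1 (by linarith)
            have hc4 : bb * (α - β * p) ≤ bb * 1 := mul_le_mul_of_nonneg_left h4 hb
            have hc5 : a * (α - p) ≤ 0 := mul_nonpos_of_nonneg_of_nonpos ha (by linarith)
            have key1 : -(2 * δ) ≤ a * (α - p) + (x - t1) * (β * p - α) := by
              nlinarith [hc1, hc2]
            have key2 : a * (α - p) + (x - t1) * (β * p - α) ≤ 2 * δ := by
              nlinarith [hc3, hc4, hc5]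
            rw [heq, abs_mul, abs_of_pos hβk1]
            exact mul_le_mul_of_nonneg_left (abs_le.2 ⟨key1, key2⟩) hβk1.le
      · -- anchor
        simp only [Nat.cast_add, Nat.cast_one]
        rw [← ht2, hgle t2 le_rfl, ← hb2, hb2val, hb1val, ho', hb2val, hb1val, pow_succ]
        linear_combination (-(β ^ k * β)) * habα
      · -- ray
        intro x hx
        simp only [Nat.cast_add, Nat.cast_one] at hx ⊢
        rw [← ht2] at hx ⊢
        rw [hgle x hx, hgle t2 le_rfl, ← hb2, hFle x (by rw [ht2t1] at hx; linarith), hb2val, ht1]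
        linear_combination (β ^ (k+1) * p) * hab

end LeakyAux

/-- for a fixed `β ∈ (0,1)`, every `LeakyReLU_α` with `α ∈ (0,1]` is
approximated uniformly on every compact `K ⊆ ℝ` by width-1 networks whose every activation
is the fixed `LeakyReLU_β`. -/
theorem leaky_approx_by_width1_fixed_leaky (β : ℝ) (hβ : β ∈ Set.Ioo (0 : ℝ) 1)
    (α : ℝ) (hα : α ∈ Set.Ioc (0 : ℝ) 1)
    (K : Set ℝ) (hK : IsCompact K) (ε : ℝ) (hε : 0 < ε) :
    ∃ (L : ℕ) (w b : ℕ → ℝ),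
      ∀ x ∈ K, |scalarNet (leakyReLU β) w b L x - leakyReLU α x| < ε := by
  obtain ⟨hβ0, hβ1⟩ := hβ
  obtain ⟨hα0, hα1⟩ := hα
  obtain ⟨M0, hM0⟩ := hK.isBounded.subset_closedBall 0
  obtain ⟨M, hM⟩ : ∃ y : ℝ, y = max M0 0 := ⟨_, rfl⟩
  have hMK : ∀ x ∈ K, -M ≤ x ∧ x ≤ M := by
    intro x hx
    have h2 := hM0 hx
    rw [Metric.mem_closedBall, Real.dist_eq, sub_zero] at h2
    have h1 : |x| ≤ M := le_trans h2 (hM ▸ le_max_left _ _)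
    exact ⟨neg_le_of_abs_le h1, le_of_abs_le h1⟩
  have hM0' : 0 ≤ M := hM ▸ le_max_right _ _
  have hex : ∃ n : ℕ, β ^ (n + 1) < α := by
    obtain ⟨n, hn⟩ := exists_pow_lt_of_lt_one hα0 hβ1
    refine ⟨n, lt_of_le_of_lt ?_ hn⟩
    calc β ^ (n + 1) = β ^ n * β := pow_succ β n
      _ ≤ β ^ n * 1 := by nlinarith [pow_pos hβ0 n]
      _ = β ^ n := mul_one _
  classical
  obtain ⟨m, hqα, hmmin⟩ : ∃ m : ℕ, β ^ (m + 1) < α ∧ ∀ j < m, ¬ β ^ (j + 1) < α :=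
    ⟨Nat.find hex, Nat.find_spec hex, fun j hj => Nat.find_min hex hj⟩
  have hαp : α ≤ β ^ m := by
    rcases Nat.eq_zero_or_pos m with h0 | h0
    · rw [h0, pow_zero]; exact hα1
    · have h1 := hmmin (m - 1) (by omega)
      push_neg at h1
      calc α ≤ β ^ (m - 1 + 1) := h1
        _ = β ^ m := by congr 1; omega
  obtain ⟨p, hp⟩ : ∃ y : ℝ, y = β ^ m := ⟨_, rfl⟩
  rw [← hp] at hαp
  have hp0 : 0 < p := hp ▸ pow_pos hβ0 m
  have hp1 : p ≤ 1 := hp ▸ pow_le_one₀ hβ0.le hβ1.le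
  have hqα' : β * p < α := by
    have : β ^ (m + 1) = β * p := by rw [hp, pow_succ]; ring
    linarith [this ▸ hqα]
  obtain ⟨δ, hδdef⟩ : ∃ y : ℝ, y = ε / 4 := ⟨_, rfl⟩
  have hδ : 0 < δ := by rw [hδdef]; positivity
  have hpq : 0 < p - β * p := by nlinarith
  obtain ⟨a, ha'⟩ : ∃ y : ℝ, y = δ * (α - β * p) / (p - β * p) := ⟨_, rfl⟩
  obtain ⟨bb, hbb'⟩ : ∃ y : ℝ, y = δ * (p - α) / (p - β * p) := ⟨_, rfl⟩
  have ha : 0 ≤ a := by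
    rw [ha']
    exact div_nonneg (by nlinarith) hpq.le
  have hb : 0 ≤ bb := by
    rw [hbb']
    exact div_nonneg (by nlinarith) hpq.le
  have hab : a + bb = δ := by
    rw [ha', hbb']
    field_simp
    ring
  have habα : p * a + (β * p) * bb = α * δ := by
    rw [ha', hbb']
    field_simp
    ring
  have hre : LeakyAux.Realizable β (leakyReLU p) := hp ▸ LeakyAux.realizable_leaky_pow β hβ0 m
  obtain ⟨k, hk⟩ := exists_nat_ge (M / δ)
  have hMk : M ≤ (k : ℝ) * δ := by
    rw [div_le_iff₀ hδ] at hk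
    linarith
  obtain ⟨f, o, href, hmono, hpos, hmid, hanc, hray⟩ :=
    LeakyAux.key β α p δ a bb hβ0 hβ1 hqα' hαp hp1 hα0 hα1 hδ ha hb hab habα hre k
  have hβk : (0:ℝ) < β ^ k := pow_pos hβ0 k
  obtain ⟨L, w, b, hnet⟩ := href.post (β ^ k)⁻¹ (-((β ^ k)⁻¹ * o))
  refine ⟨L, w, b, fun x hx => ?_⟩
  rw [hnet x]
  show |(β ^ k)⁻¹ * f x + -((β ^ k)⁻¹ * o) - leakyReLU α x| < ε
  obtain ⟨hx1, hx2⟩ := hMK x hx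
  rcases le_or_gt 0 x with hxp | hxn
  · rw [LeakyAux.leaky_of_nonneg hxp, hpos x hxp]
    have : (β ^ k)⁻¹ * (β ^ k * x + o) + -((β ^ k)⁻¹ * o) - x = 0 := by
      field_simp
      ring
    rw [this, abs_zero]
    exact hε
  · rw [LeakyAux.leaky_of_nonpos hxn.le]
    have hxge : -((k : ℝ) * δ) ≤ x := by linarith
    have h1 := hmid x hxge hxn.le
    have heq : (β ^ k)⁻¹ * f x + -((β ^ k)⁻¹ * o) - α * x
        = (β ^ k)⁻¹ * (f x - (β ^ k * (α * x) + o)) := by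
      field_simp
      ring
    rw [heq, abs_mul, abs_of_pos (inv_pos.2 hβk)]
    calc (β ^ k)⁻¹ * |f x - (β ^ k * (α * x) + o)| ≤ (β ^ k)⁻¹ * (β ^ k * (2 * δ)) :=
          mul_le_mul_of_nonneg_left h1 (inv_pos.2 hβk).le
      _ = 2 * δ := by field_simp
      _ < ε := by rw [hδdef]; linarith
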